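/- Under the same Crank-Nicolson gyration update with constant B and u⁰ ⊥ B, in the limit Ω Δt₀ → ∞ (first time-step), the first-step displacement satisfies lim x¹ = x⁰ + 2ρ (û⁰ × b), where b = B/‖B‖, û⁰ = u⁰/‖u⁰‖, ρ = ‖u⁰‖/Ω, Ω = ‖B‖. That is, x⁰ and the limiting x¹ are antipodal points on the exact physical gyro-orbit centered at x⁰ + ρ (û⁰ × b). -/

import Mathlib

/-!
The Crank–Nicolson velocity is `(u⁰ + (Δt/2) u⁰ × B) / (1 + Ω²Δt²/4)`, so the displacement
`Δt u^{1/2}` has a `u⁰`-component of order `1/Δt`, while its `u⁰ × B`-component tends to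
`2/Ω²`. Hence `x¹ → x⁰ + (2/Ω²) u⁰ × B = x⁰ + 2ρ (û⁰ × b)`. As `u⁰ ⊥ B`, the Lagrange identity
gives `‖u⁰ × B‖ = ‖u⁰‖ Ω`, so the centre `x⁰ + ρ (û⁰ × b)` lies at distance `ρ` from both `x⁰`
and the limit point.
-/

open Real Filter

noncomputable def cross (a b : EuclideanSpace ℝ (Fin 3)) : EuclideanSpace ℝ (Fin 3) :=
  WithLp.toLp 2 ![a 1 * b 2 - a 2 * b 1, a 2 * b 0 - a 0 * b 2, a 0 * b 1 - a 1 * b 0]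

open scoped Matrix Topology

lemma cross_eq_crossProduct (a b : EuclideanSpace ℝ (Fin 3)) :
    cross a b = WithLp.toLp 2 (a.ofLp ⨯₃ b.ofLp) := rfl

lemma cross_smul_left (s : ℝ) (a b : EuclideanSpace ℝ (Fin 3)) :
    cross (s • a) b = s • cross a b := by
  simp [cross_eq_crossProduct]

lemma cross_smul_right (s : ℝ) (a b : EuclideanSpace ℝ (Fin 3)) :
    cross a (s • b) = s • cross a b := by
  simp [cross_eq_crossProduct]

lemma norm_cross_sq (a b : EuclideanSpace ℝ (Fin 3)) :
    ‖cross a b‖ ^ 2 = ‖a‖ ^ 2 * ‖b‖ ^ 2 - inner ℝ a b ^ 2 := by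
  simp only [← real_inner_self_eq_norm_sq, cross_eq_crossProduct,
    EuclideanSpace.inner_eq_star_dotProduct, star_trivial, cross_dot_cross,
    dotProduct_comm b.ofLp a.ofLp]
  ring

lemma norm_cross_of_inner_eq_zero {a b : EuclideanSpace ℝ (Fin 3)} (h : inner ℝ a b = 0) :
    ‖cross a b‖ = ‖a‖ * ‖b‖ := by
  rw [← sq_eq_sq₀ (norm_nonneg _) (by positivity), norm_cross_sq, h, mul_pow]
  ring

lemma norm_smul_inv_norm_smul {E : Type*} [NormedAddCommGroup E] [NormedSpace ℝ E] (u : E) :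
    ‖u‖ • ‖u‖⁻¹ • u = u := by
  rcases eq_or_ne u 0 with rfl | hu
  · simp
  · exact smul_inv_smul₀ (norm_ne_zero_iff.mpr hu) u

lemma smul_cross_normalized_eq_inv_norm_sq_smul_cross (u B : EuclideanSpace ℝ (Fin 3)) :
    (‖u‖ / ‖B‖) • cross (‖u‖⁻¹ • u) (‖B‖⁻¹ • B) = (‖B‖ ^ 2)⁻¹ • cross u B := by
  rw [cross_smul_right, smul_smul, show ‖u‖ / ‖B‖ * ‖B‖⁻¹ = (‖B‖ ^ 2)⁻¹ * ‖u‖ by ring,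
    mul_smul, ← cross_smul_left, norm_smul_inv_norm_smul]

lemma norm_inv_norm_sq_smul_cross {u B : EuclideanSpace ℝ (Fin 3)} (h : inner ℝ u B = 0) :
    ‖(‖B‖ ^ 2)⁻¹ • cross u B‖ = ‖u‖ / ‖B‖ := by
  rw [norm_smul, norm_cross_of_inner_eq_zero h, norm_inv, norm_pow, norm_norm]
  rcases eq_or_ne ‖B‖ 0 with hB | hB
  · simp [hB]
  · field_simp

lemma tendsto_sq_div_two_mul_inv_one_add_sq {c : ℝ} (hc : 0 < c) :
    Tendsto (fun t : ℝ => t ^ 2 / 2 * (1 + c * t ^ 2 / 4)⁻¹) atTop (𝓝 (2 / c)) := by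
  have hden : Tendsto (fun t : ℝ => 1 + c * t ^ 2 / 4) atTop atTop :=
    tendsto_atTop_add_const_left _ _
      (((tendsto_pow_atTop two_ne_zero).const_mul_atTop hc).atTop_div_const four_pos)
  have hsplit : (fun t : ℝ => t ^ 2 / 2 * (1 + c * t ^ 2 / 4)⁻¹) =
      fun t => 2 / c - 2 / c * (1 + c * t ^ 2 / 4)⁻¹ := by
    funext t
    have : 1 + c * t ^ 2 / 4 ≠ 0 := by positivity
    field_simp
    ring
  rw [hsplit]
  simpa using tendsto_const_nhds.sub (hden.inv_tendsto_atTop.const_mul (2 / c))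

lemma tendsto_mul_inv_one_add_sq {c : ℝ} (hc : 0 < c) :
    Tendsto (fun t : ℝ => t * (1 + c * t ^ 2 / 4)⁻¹) atTop (𝓝 0) := by
  have hfactor : ∀ᶠ t : ℝ in atTop,
      2 * t⁻¹ * (t ^ 2 / 2 * (1 + c * t ^ 2 / 4)⁻¹) = t * (1 + c * t ^ 2 / 4)⁻¹ := by
    filter_upwards [eventually_ne_atTop 0] with t ht
    field_simp
  refine Tendsto.congr' hfactor ?_
  simpa using
    (tendsto_inv_atTop_zero.const_mul 2).mul (tendsto_sq_div_two_mul_inv_one_add_sq hc)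

lemma tendsto_crankNicolson_step {E : Type*} [NormedAddCommGroup E] [NormedSpace ℝ E]
    {c : ℝ} (hc : 0 < c) (x u w : E) :
    Tendsto (fun t : ℝ => x + t • ((1 + c * t ^ 2 / 4)⁻¹ • (u + (t / 2) • w))) atTop
      (𝓝 (x + (2 / c) • w)) := by
  have hsplit : (fun t : ℝ => x + t • ((1 + c * t ^ 2 / 4)⁻¹ • (u + (t / 2) • w))) =
      fun t => x + ((t * (1 + c * t ^ 2 / 4)⁻¹) • u +
        (t ^ 2 / 2 * (1 + c * t ^ 2 / 4)⁻¹) • w) := by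
    funext t
    simp only [smul_add, smul_smul]
    congr 3
    ring
  rw [hsplit]
  simpa using tendsto_const_nhds.add (((tendsto_mul_inv_one_add_sq hc).smul_const u).add
    ((tendsto_sq_div_two_mul_inv_one_add_sq hc).smul_const w))

theorem stmt_8_general (B u0 x0 : EuclideanSpace ℝ (Fin 3)) (hB : B ≠ 0)
    (hperp : (inner ℝ u0 B : ℝ) = 0) :
    Tendsto
      (fun Δt : ℝ => x0 + Δt •
        ((1 + ‖B‖ ^ 2 * Δt ^ 2 / 4)⁻¹ • (u0 + (Δt / 2) • cross u0 B)))
      atTop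
      (nhds (x0 + (2 * (‖u0‖ / ‖B‖)) • cross (‖u0‖⁻¹ • u0) (‖B‖⁻¹ • B))) ∧
    ‖(x0 + (2 * (‖u0‖ / ‖B‖)) • cross (‖u0‖⁻¹ • u0) (‖B‖⁻¹ • B)) -
        (x0 + (‖u0‖ / ‖B‖) • cross (‖u0‖⁻¹ • u0) (‖B‖⁻¹ • B))‖ = ‖u0‖ / ‖B‖ ∧
    ‖x0 - (x0 + (‖u0‖ / ‖B‖) • cross (‖u0‖⁻¹ • u0) (‖B‖⁻¹ • B))‖ = ‖u0‖ / ‖B‖ := by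
  have hc : 0 < ‖B‖ ^ 2 := by positivity
  have hcentre := smul_cross_normalized_eq_inv_norm_sq_smul_cross u0 B
  have hlimit : (2 * (‖u0‖ / ‖B‖)) • cross (‖u0‖⁻¹ • u0) (‖B‖⁻¹ • B) =
      (2 / ‖B‖ ^ 2) • cross u0 B := by
    rw [mul_smul, hcentre, smul_smul, div_eq_mul_inv]
  have hradius := norm_inv_norm_sq_smul_cross hperp
  rw [hlimit, hcentre]
  refine ⟨tendsto_crankNicolson_step hc x0 u0 (cross u0 B), ?_, ?_⟩
  · rw [add_sub_add_left_eq_sub, ← sub_smul, div_eq_mul_inv, two_mul, add_sub_cancel_right,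
      hradius]
  · rw [sub_add_cancel_left, norm_neg, hradius]

/-- In the limit ΩΔt₀ → ∞, the first Crank-Nicolson step moves the particle to
the point diametrically opposite x⁰ on the exact gyro-orbit:
x¹ → x⁰ + 2ρ (û⁰ × b), with the orbit centered at x⁰ + ρ (û⁰ × b). -/
theorem stmt_8 (B u0 x0 : EuclideanSpace ℝ (Fin 3)) (hB : B ≠ 0) (hu0 : u0 ≠ 0)
    (hperp : (inner ℝ u0 B : ℝ) = 0) :
    Tendsto
      (fun Δt : ℝ => x0 + Δt •
        ((1 + ‖B‖ ^ 2 * Δt ^ 2 / 4)⁻¹ • (u0 + (Δt / 2) • cross u0 B)))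
      atTop
      (nhds (x0 + (2 * (‖u0‖ / ‖B‖)) • cross (‖u0‖⁻¹ • u0) (‖B‖⁻¹ • B))) ∧
    ‖(x0 + (2 * (‖u0‖ / ‖B‖)) • cross (‖u0‖⁻¹ • u0) (‖B‖⁻¹ • B)) -
        (x0 + (‖u0‖ / ‖B‖) • cross (‖u0‖⁻¹ • u0) (‖B‖⁻¹ • B))‖ = ‖u0‖ / ‖B‖ ∧
    ‖x0 - (x0 + (‖u0‖ / ‖B‖) • cross (‖u0‖⁻¹ • u0) (‖B‖⁻¹ • B))‖ = ‖u0‖ / ‖B‖ :=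
  stmt_8_general B u0 x0 hB hperp
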